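/- Let f1, f2 be homogeneous polynomials of degrees d1, d2 in A[X1,X2,Y1,Y2]-coefficient ring A, with decompositions f_i(X1,X2) − f_i(Y1,Y2) = (X1−Y1) h_{i,1} + (X2−Y2) h_{i,2}. Then the class of det(h_{i,j})_{i,j=1,2} in B ⊗_A B, where B = A[X1,X2]/(f1,f2), is independent of the choice of the decompositions. -/
import Mathlib


open MvPolynomial

private lemma X_dvd_of_coeff {σ R : Type*} [CommRing R] (i : σ) (a : MvPolynomial σ R)
    (h : ∀ m : σ →₀ ℕ, m i = 0 → coeff m a = 0) : X i ∣ a := by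
  rw [X_dvd_iff_modMonomial_eq_zero]
  ext m
  by_cases hm : Finsupp.single i 1 ≤ m
  · rw [coeff_modMonomial_of_le _ hm, coeff_zero]
  · rw [coeff_modMonomial_of_not_le _ hm, coeff_zero]
    apply h
    rw [Finsupp.single_le_iff] at hm
    omega

private lemma koszulXY {σ R : Type*} [CommRing R] [DecidableEq σ] (i j : σ)
    (hij : j ≠ i) (a b : MvPolynomial σ R) (h : X i * a + X j * b = 0) :
    ∃ c, a = X j * c ∧ b = -(X i * c) := by
  have hd : X j ∣ a := by
    apply X_dvd_of_coeff
    intro m hm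
    have h1 : coeff (Finsupp.single i 1 + m) (X i * a + X j * b) = 0 := by
      rw [h, coeff_zero]
    rw [coeff_add, coeff_X_mul, coeff_X_mul'] at h1
    have hns : j ∉ (Finsupp.single i 1 + m).support := by
      simp [Finsupp.single_apply, Ne.symm hij, hm]
    rw [if_neg hns] at h1
    simpa using h1
  obtain ⟨c, hc⟩ := hd
  refine ⟨c, hc, ?_⟩
  have h2 : X j * (X i * c + b) = X j * 0 := by
    rw [mul_zero]; linear_combination h - X i * hc
  have h3 := (isRegular_X (n := j) (R := R) (σ := σ)).left h2
  linear_combination h3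

private lemma koszulUV {R : Type*} [CommRing R] (a b : MvPolynomial (Fin 4) R)
    (h : (X 0 - X 2) * a + (X 1 - X 3) * b = 0) :
    ∃ c, a = (X 1 - X 3) * c ∧ b = -((X 0 - X 2) * c) := by
  set P : MvPolynomial (Fin 4) R →ₐ[R] MvPolynomial (Fin 4) R :=
    aeval ![X 0 + X 2, X 1 + X 3, X 2, X 3] with hPdef
  set M : MvPolynomial (Fin 4) R →ₐ[R] MvPolynomial (Fin 4) R :=
    aeval ![X 0 - X 2, X 1 - X 3, X 2, X 3] with hMdef
  have hMP : ∀ p, M (P p) = p := by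
    intro p
    have : M.comp P = AlgHom.id R _ := by
      apply MvPolynomial.algHom_ext
      intro i
      fin_cases i <;> simp [hPdef, hMdef]
    calc M (P p) = (M.comp P) p := rfl
    _ = p := by rw [this]; rfl
  have hP := congrArg P h
  rw [map_add, map_mul, map_mul, map_sub, map_sub, map_zero] at hP
  have e0 : P (X 0) - P (X 2) = X 0 := by simp [hPdef]
  have e1 : P (X 1) - P (X 3) = X 1 := by simp [hPdef]
  rw [e0, e1] at hP
  obtain ⟨c, hc1, hc2⟩ := koszulXY 0 1 (by decide) (P a) (P b) hP
  have m1 : M (X 1) = X 1 - X 3 := by simp [hMdef]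
  have m0 : M (X 0) = X 0 - X 2 := by simp [hMdef]
  refine ⟨M c, ?_, ?_⟩
  · have h' := congrArg M hc1
    rwa [hMP a, map_mul, m1] at h'
  · have h' := congrArg M hc2
    rwa [hMP b, map_neg, map_mul, m0] at h'

/-- Let `f1, f2 ∈ A[X1,X2]` be homogeneous of degrees `d1, d2` forming a
regular sequence.  Working in `A[X1,X2,Y1,Y2]` (variables `0,1 = X1,X2` and `2,3 = Y1,Y2`),
given two decompositions `f_i(X) − f_i(Y) = (X1−Y1) h_{i,1} + (X2−Y2) h_{i,2}`, the
determinants `det (h_{i,j})` have the same class in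
`B ⊗_A B = A[X,Y]/(f1(X), f2(X), f1(Y), f2(Y))`. -/
theorem stmt3 {A : Type*} [CommRing A] [Nontrivial A] (d1 d2 : ℕ)
    (f1 f2 : MvPolynomial (Fin 2) A)
    (hf1 : f1.IsHomogeneous d1) (hf2 : f2.IsHomogeneous d2)
    (hreg : RingTheory.Sequence.IsRegular (MvPolynomial (Fin 2) A) [f1, f2])
    -- X- and Y-copies of the `f_i` in `A[X1,X2,Y1,Y2]`
    (F1X F2X F1Y F2Y : MvPolynomial (Fin 4) A)
    (hF1X : F1X = rename ![0, 1] f1) (hF2X : F2X = rename ![0, 1] f2)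
    (hF1Y : F1Y = rename ![2, 3] f1) (hF2Y : F2Y = rename ![2, 3] f2)
    (h11 h12 h21 h22 g11 g12 g21 g22 : MvPolynomial (Fin 4) A)
    (hh1 : F1X - F1Y = (X 0 - X 2) * h11 + (X 1 - X 3) * h12)
    (hh2 : F2X - F2Y = (X 0 - X 2) * h21 + (X 1 - X 3) * h22)
    (hg1 : F1X - F1Y = (X 0 - X 2) * g11 + (X 1 - X 3) * g12)
    (hg2 : F2X - F2Y = (X 0 - X 2) * g21 + (X 1 - X 3) * g22) :
    (h11 * h22 - h12 * h21) - (g11 * g22 - g12 * g21) ∈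
      Ideal.span {F1X, F2X, F1Y, F2Y} := by
  obtain ⟨c, hc1, hc2⟩ := koszulUV (h11 - g11) (h12 - g12)
    (by linear_combination hg1 - hh1)
  obtain ⟨e, he1, he2⟩ := koszulUV (h21 - g21) (h22 - g22)
    (by linear_combination hg2 - hh2)
  have key : (h11 * h22 - h12 * h21) - (g11 * g22 - g12 * g21)
      = (-e) * F1X + e * F1Y + c * F2X + (-c) * F2Y := by
    linear_combination h22 * hc1 - h21 * hc2 + g11 * he2 - g12 * he1 + e * hg1 - c * hg2
      + (X 1 - X 3) * c * he2 + (X 0 - X 2) * c * he1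
  rw [key]
  have mF1X : F1X ∈ Ideal.span {F1X, F2X, F1Y, F2Y} := Ideal.subset_span (by simp)
  have mF2X : F2X ∈ Ideal.span {F1X, F2X, F1Y, F2Y} := Ideal.subset_span (by simp)
  have mF1Y : F1Y ∈ Ideal.span {F1X, F2X, F1Y, F2Y} := Ideal.subset_span (by simp)
  have mF2Y : F2Y ∈ Ideal.span {F1X, F2X, F1Y, F2Y} := Ideal.subset_span (by simp)
  exact Ideal.add_mem _ (Ideal.add_mem _ (Ideal.add_mem _
    (Ideal.mul_mem_left _ _ mF1X) (Ideal.mul_mem_left _ _ mF1Y))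
    (Ideal.mul_mem_left _ _ mF2X)) (Ideal.mul_mem_left _ _ mF2Y)
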